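/- arXiv:1302.6097 — 6 statements merged into one kernel-verified Lean document; each statement's English description precedes it below -/
import Mathlib

section
/- Let n ≥ 2 and let f(x) = a_n x^n + … + a_1 x + a_0 ∈ ℤ[x] be a polynomial of degree n that is Eisenstein with respect to a prime p. Then p^{n−1} divides the resultant Res(f, f′) of f and its derivative f′. -/
/-!
Modulo `p` an Eisenstein polynomial of degree `n` is `aₙ xⁿ` and its derivative is `n aₙ xⁿ⁻¹`.
Hence in the Sylvester matrix of `f` and `f'` every column to the right of the first `n`
is divisible by `p`: such an entry is a coefficient of `f` or `f'` below the leading one.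
There are `n - 1` such columns, and the determinant is multilinear in the columns.
-/

open Polynomial Filter

/-- `f ∈ ℤ[x]` is Eisenstein with respect to the prime `p`:
`p ∣ aᵢ` for all `i` below the degree, `p² ∤ a₀` and `p ∤ aₙ`. -/
def IsEisensteinWith (f : Polynomial ℤ) (p : ℕ) : Prop :=
  (∀ i < f.natDegree, (p : ℤ) ∣ f.coeff i) ∧ ¬ ((p : ℤ)^2 ∣ f.coeff 0) ∧
    ¬ ((p : ℤ) ∣ f.leadingCoeff)
/-- The Sylvester matrix of `f` and `g` (with respect to their natural degrees):
an `(n + m) × (n + m)` matrix (`m = deg f`, `n = deg g`) whose first `n` rows carry the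
coefficients of `f` (leading coefficient first) shifted along, and whose last `m` rows
carry the coefficients of `g` likewise. -/
def sylvesterMatrix (f g : Polynomial ℤ) :
    Matrix (Fin (g.natDegree + f.natDegree)) (Fin (g.natDegree + f.natDegree)) ℤ :=
  fun i j =>
    if (i : ℕ) < g.natDegree then
      if (i : ℕ) ≤ (j : ℕ) ∧ (j : ℕ) ≤ (i : ℕ) + f.natDegree then
        f.coeff (f.natDegree + i - j)
      else 0
    else
      if (i : ℕ) - g.natDegree ≤ (j : ℕ) ∧ (j : ℕ) ≤ (i : ℕ) - g.natDegree + g.natDegree then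
        g.coeff (g.natDegree + ((i : ℕ) - g.natDegree) - j)
      else 0

/-- The resultant of `f` and `g`: the determinant of their Sylvester matrix. -/
def resultant (f g : Polynomial ℤ) : ℤ :=
  (sylvesterMatrix f g).det

theorem Matrix.pow_card_dvd_det_of_dvd_col {ι R : Type*} [Fintype ι] [DecidableEq ι]
    [CommRing R] (M : Matrix ι ι R) (a : R) (s : Finset ι) (h : ∀ i, ∀ j ∈ s, a ∣ M i j) :
    a ^ s.card ∣ M.det := by
  rw [Matrix.det_apply']
  refine Finset.dvd_sum fun σ _ => Dvd.dvd.mul_left ?_ _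
  rw [← Finset.prod_mul_prod_compl s, ← Finset.prod_const]
  exact (Finset.prod_dvd_prod_of_dvd _ _ fun j hj => h (σ j) j hj).mul_right _

theorem Polynomial.dvd_coeff_derivative_of_dvd_coeff {R : Type*} [Semiring R] {f : R[X]} {a : R}
    (hf : ∀ i < f.natDegree, a ∣ f.coeff i) :
    ∀ i < (derivative f).natDegree, a ∣ (derivative f).coeff i := fun i hi => by
  rw [coeff_derivative]
  exact (hf (i + 1) (by have := natDegree_derivative_le f; omega)).mul_right _

section Sylvester

variable {f g : ℤ[X]} {a : ℤ}

theorem dvd_sylvesterMatrix_of_max_natDegree_le (hf : ∀ i < f.natDegree, a ∣ f.coeff i)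
    (hg : ∀ i < g.natDegree, a ∣ g.coeff i) (i j : Fin (g.natDegree + f.natDegree))
    (hj : max f.natDegree g.natDegree ≤ j) : a ∣ sylvesterMatrix f g i j := by
  have := j.isLt
  unfold sylvesterMatrix
  split_ifs
  · exact hf _ (by omega)
  · exact dvd_zero a
  · exact hg _ (by omega)
  · exact dvd_zero a

theorem pow_min_natDegree_dvd_resultant (hf : ∀ i < f.natDegree, a ∣ f.coeff i)
    (hg : ∀ i < g.natDegree, a ∣ g.coeff i) :
    a ^ min f.natDegree g.natDegree ∣ _root_.resultant f g := by
  let s : Finset (Fin (g.natDegree + f.natDegree)) :=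
    {j | ¬ (j : ℕ) < max f.natDegree g.natDegree}
  have hs : s.card = min f.natDegree g.natDegree := by
    have := Finset.card_filter_add_card_filter_not (s := Finset.univ)
      (fun j : Fin (g.natDegree + f.natDegree) => (j : ℕ) < max f.natDegree g.natDegree)
    rw [Fin.card_filter_val_lt, Finset.card_univ, Fintype.card_fin] at this
    change _ + s.card = _ at this
    omega
  rw [← hs]
  exact Matrix.pow_card_dvd_det_of_dvd_col _ a s fun i j hj =>
    dvd_sylvesterMatrix_of_max_natDegree_le hf hg i j (not_lt.mp (Finset.mem_filter.mp hj).2)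

end Sylvester

theorem eisenstein_pow_dvd_resultant_general (n : ℕ) (f : Polynomial ℤ)
    (hdeg : f.natDegree = n) (p : ℕ) (hE : IsEisensteinWith f p) :
    (p : ℤ)^(n - 1) ∣ _root_.resultant f (derivative f) := by
  have h := pow_min_natDegree_dvd_resultant hE.1 (dvd_coeff_derivative_of_dvd_coeff hE.1)
  rwa [natDegree_derivative, hdeg, min_eq_right (Nat.sub_le n 1)] at h

/-- If `f ∈ ℤ[x]` has degree `n ≥ 2` and is Eisenstein with respect to a prime `p`,
then `p^(n-1)` divides the resultant `Res(f, f')`. -/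
theorem eisenstein_pow_dvd_resultant (n : ℕ) (hn : 2 ≤ n) (f : Polynomial ℤ)
    (hdeg : f.natDegree = n) (p : ℕ) (hp : p.Prime) (hE : IsEisensteinWith f p) :
    (p : ℤ)^(n - 1) ∣ _root_.resultant f (derivative f) :=
  eisenstein_pow_dvd_resultant_general n f hdeg p hE
end

section
/- Suppose f ∈ ℤ[x] has degree n ≥ 2 and f is a shifted Eisenstein polynomial. Then there exists a prime p with p^{n−1} ∣ Res(f, f′), and, letting q be the largest prime such that q^{n−1} ∣ Res(f, f′), there exists an integer s with 0 ≤ s < q such that f(x + s) is an Eisenstein polynomial. -/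
/-!
Translation does not change the resultant, so `Res(f, f') = Res(g, g')` for `g = f(x + s)`
Eisenstein at `p`. Modulo `p`, `g` and `g'` are monomials of degrees `n` and `n - 1`, so the
`n - 1` rows of the Sylvester matrix of `g, g'` recording the coefficients of `x⁰, …, xⁿ⁻²`
vanish modulo `p`, whence `p ^ (n - 1) ∣ Res(f, f')` and `p ≤ q`. Finally `s` may be replaced by
`s mod p`: a shift by a multiple of `p` changes the coefficients of `g` only modulo `p`, and its
constant term only modulo `p²` because `p ∣ g'(0)`.
-/

open Polynomial Filter

/-- `f` is an Eisenstein polynomial: it is Eisenstein with respect to some prime. -/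
def IsEisenstein (f : Polynomial ℤ) : Prop :=
  ∃ p : ℕ, p.Prime ∧ IsEisensteinWith f p
theorem Matrix.pow_card_dvd_det_of_forall_dvd {n R : Type*} [Fintype n] [DecidableEq n]
    [CommRing R] (A : Matrix n n R) (a : R) (s : Finset n) (h : ∀ i ∈ s, ∀ j, a ∣ A i j) :
    a ^ s.card ∣ A.det := by
  classical
  choose! B hB using h
  have hA : A = Matrix.diagonal (fun i => if i ∈ s then a else 1) *
      Matrix.of (fun i j => if i ∈ s then B i j else A i j) := by
    ext i j
    by_cases hi : i ∈ s <;> simp [Matrix.diagonal_mul, hi, hB]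
  rw [hA, Matrix.det_mul, Matrix.det_diagonal, Finset.prod_ite_mem, Finset.univ_inter,
    Finset.prod_const]
  exact dvd_mul_right _ _

theorem Polynomial.sylvester_apply {R : Type*} [Semiring R] (f g : R[X]) (m n : ℕ)
    (i j : Fin (m + n)) :
    sylvester f g m n i j =
      if (j : ℕ) < m then
        if (j : ℕ) ≤ i ∧ (i : ℕ) ≤ j + n then g.coeff (i - j) else 0
      else
        if (j : ℕ) - m ≤ i ∧ (i : ℕ) ≤ j - m + m then f.coeff (i - (j - m)) else 0 := by
  induction j using Fin.addCases with
  | left j => simp [sylvester, j.isLt]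
  | right j => simp [sylvester]

theorem Polynomial.pow_dvd_resultant_of_dvd_coeff {R : Type*} [CommRing R] {f g : R[X]}
    {m n k : ℕ} (hk : k ≤ m + n) {a : R} (hf : ∀ i < k, a ∣ f.coeff i)
    (hg : ∀ i < k, a ∣ g.coeff i) : a ^ k ∣ f.resultant g m n := by
  have hcard : (Finset.univ.filter fun i : Fin (m + n) => (i : ℕ) < k).card = k := by
    rw [Fin.card_filter_val_lt, min_eq_right hk]
  refine hcard ▸ Matrix.pow_card_dvd_det_of_forall_dvd _ a _ fun i hi j => ?_
  rw [Finset.mem_filter] at hi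
  induction j using Fin.addCases with
  | left j =>
    simp only [sylvester, Matrix.of_apply, Fin.addCases_left]
    split_ifs
    exacts [hg _ (by omega), dvd_zero a]
  | right j =>
    simp only [sylvester, Matrix.of_apply, Fin.addCases_right]
    split_ifs
    exacts [hf _ (by omega), dvd_zero a]

theorem Polynomial.derivative_taylor {R : Type*} [CommRing R] (f : R[X]) (r : R) :
    derivative (taylor r f) = taylor r (derivative f) := by
  simp [taylor_apply, derivative_comp]

theorem Polynomial.pow_dvd_resultant_derivative_of_dvd_coeff_taylor {R : Type*} [CommRing R]
    {f : R[X]} {a r : R} (h : ∀ i < f.natDegree, a ∣ (taylor r f).coeff i) :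
    a ^ (f.natDegree - 1) ∣ f.resultant (derivative f) := by
  rw [← resultant_taylor f (derivative f) r, ← derivative_taylor]
  refine pow_dvd_resultant_of_dvd_coeff (by rw [natDegree_taylor]; omega)
    (fun i hi => h i (by omega)) (fun i hi => ?_)
  rw [coeff_derivative]
  exact dvd_mul_of_dvd_left (h (i + 1) (by omega)) _

theorem Polynomial.dvd_coeff_taylor_sub_coeff {R : Type*} [CommRing R] {a r : R} (hr : a ∣ r)
    (g : R[X]) (i : ℕ) : a ∣ (taylor r g).coeff i - g.coeff i := by
  -- modulo `a` the shift by `r` is the identity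
  let φ := Ideal.Quotient.mk (Ideal.span {a})
  have hmap : (taylor r g).map φ = g.map φ := by
    rw [map_taylor, Ideal.Quotient.eq_zero_iff_mem.mpr (Ideal.mem_span_singleton.mpr hr),
      taylor_zero]
  have := congr_arg (coeff · i) hmap
  simp only [coeff_map] at this
  rwa [Ideal.Quotient.eq, Ideal.mem_span_singleton] at this

theorem Polynomial.sq_dvd_coeff_zero_taylor_sub_coeff_zero {R : Type*} [CommRing R] {a r : R}
    (hr : a ∣ r) {g : R[X]} (h1 : a ∣ g.coeff 1) :
    a ^ 2 ∣ (taylor r g).coeff 0 - g.coeff 0 := by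
  obtain ⟨c, hc⟩ := exists_mul_sq_add_linear_part_eq_eval_add g 0 r
  rw [zero_add] at hc
  rw [taylor_coeff_zero, ← hc, coeff_zero_eq_eval_zero, add_sub_cancel_right,
    ← coeff_zero_eq_eval_zero, coeff_derivative]
  refine dvd_add (dvd_mul_of_dvd_right (pow_dvd_pow_of_dvd hr 2) c) ?_
  rw [sq]
  exact mul_dvd_mul (by simpa using h1) hr

theorem sylvesterMatrix_eq_submatrix_sylvester (f g : ℤ[X]) :
    sylvesterMatrix f g = (sylvester f g f.natDegree g.natDegree).transpose.submatrix
      ((finCongr (add_comm _ _)).trans Fin.revPerm)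
      ((finCongr (add_comm _ _)).trans Fin.revPerm) := by
  ext i j
  have hi := i.isLt
  have hj := j.isLt
  simp only [sylvesterMatrix, Matrix.submatrix_apply, Matrix.transpose_apply, Equiv.trans_apply,
    finCongr_apply, Fin.revPerm_apply, sylvester_apply, Fin.val_rev, Fin.val_cast]
  split_ifs <;> first | rfl | omega | (congr 1; omega)

theorem resultant_eq_polynomial_resultant (f g : ℤ[X]) :
    _root_.resultant f g = Polynomial.resultant f g := by
  rw [_root_.resultant, sylvesterMatrix_eq_submatrix_sylvester, Matrix.det_submatrix_equiv_self,
    Matrix.det_transpose, Polynomial.resultant]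

theorem IsEisensteinWith.taylor {g : ℤ[X]} {p : ℕ} (h : IsEisensteinWith g p)
    (hg : 2 ≤ g.natDegree) {r : ℤ} (hr : (p : ℤ) ∣ r) : IsEisensteinWith (taylor r g) p := by
  obtain ⟨hlow, hconst, hlead⟩ := h
  refine ⟨fun i hi => ?_, fun hdvd => hconst ?_, by rwa [leadingCoeff_taylor]⟩
  · rw [natDegree_taylor] at hi
    exact (dvd_sub_left (hlow i hi)).mp (dvd_coeff_taylor_sub_coeff hr g i)
  · have := sq_dvd_coeff_zero_taylor_sub_coeff_zero hr (hlow 1 (by omega))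
    exact (dvd_sub_right hdvd).mp this

/-- If `f` of degree `n ≥ 2` is a shifted Eisenstein polynomial, then some prime `p` satisfies
`p^(n-1) ∣ Res(f, f')`, and if `q` is the largest such prime then `f(x + s)` is an Eisenstein
polynomial for some integer `s` with `0 ≤ s < q`. -/
theorem shifted_eisenstein_small_shift (n : ℕ) (hn : 2 ≤ n) (f : Polynomial ℤ)
    (hdeg : f.natDegree = n) (hshift : ∃ s : ℤ, IsEisenstein (f.comp (X + C s))) :
    (∃ p : ℕ, p.Prime ∧ (p : ℤ)^(n - 1) ∣ _root_.resultant f (derivative f)) ∧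
    ∀ q : ℕ, q.Prime → (q : ℤ)^(n - 1) ∣ _root_.resultant f (derivative f) →
      (∀ r : ℕ, r.Prime → (r : ℤ)^(n - 1) ∣ _root_.resultant f (derivative f) → r ≤ q) →
      ∃ s : ℤ, 0 ≤ s ∧ s < (q : ℤ) ∧ IsEisenstein (f.comp (X + C s)) := by
  obtain ⟨s, p, hp, heis⟩ := hshift
  rw [← taylor_apply] at heis
  have hdvd : (p : ℤ) ^ (n - 1) ∣ _root_.resultant f (derivative f) := by
    rw [resultant_eq_polynomial_resultant, ← hdeg]
    exact pow_dvd_resultant_derivative_of_dvd_coeff_taylor fun i hi =>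
      heis.1 i (by rwa [natDegree_taylor])
  refine ⟨⟨p, hp, hdvd⟩, fun q _ _ hmax => ?_⟩
  have hp0 : (0 : ℤ) < p := by exact_mod_cast hp.pos
  refine ⟨s % p, Int.emod_nonneg s hp0.ne', (Int.emod_lt_of_pos s hp0).trans_le
    (by exact_mod_cast hmax p hp hdvd), p, hp, ?_⟩
  rw [← taylor_apply, ← sub_add_cancel (s % p) s, ← taylor_taylor]
  exact heis.taylor (by rw [natDegree_taylor]; omega) (Int.mod_modEq s p).symm.dvd
end

section
/- Let f = a_n x^n + … + a_1 x + a_0 ∈ ℤ[x] be a polynomial of degree n ≥ 2. Then |Res(f, f′)| ≤ |a_n| · n^n · L(f)^{2n−2}, where f′ is the derivative of f. -/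
open Polynomial Filter

/-- Length of an integer polynomial: the sum of the absolute values of its coefficients. -/
def polyLength (f : Polynomial ℤ) : ℤ :=
  ∑ i ∈ Finset.range (f.natDegree + 1), |f.coeff i|
/-! The subtraction of `n` times the first row of the Sylvester matrix of `f` and `f'` from its
first `f'`-row leaves `aₙ` as the only nonzero entry of the first column, and turns that row into
`(-j a_{n-j})_j`, of `ℓ¹`-norm at most `n L(f)`. Expanding along the first column and bounding the
remaining determinant by the product of the `ℓ¹`-norms of its rows (`n - 2` rows of norm `L(f)`
and `n` rows of norm at most `n L(f)`, as `L(f') ≤ n L(f)`) gives the bound. -/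

open Matrix

namespace Matrix

variable {ι R : Type*} [Fintype ι] [DecidableEq ι]

theorem abs_det_le_prod_sum_abs [CommRing R] [LinearOrder R] [IsStrictOrderedRing R]
    (A : Matrix ι ι R) : |A.det| ≤ ∏ i, ∑ j, |A i j| := by
  rw [← det_transpose, det_apply, Fintype.prod_sum]
  calc |∑ σ : Equiv.Perm ι, σ.sign • ∏ i, Aᵀ (σ i) i|
      ≤ ∑ σ : Equiv.Perm ι, ∏ i, |A i (σ i)| := by
        refine (Finset.abs_sum_le_sum_abs _ _).trans_eq (Finset.sum_congr rfl fun σ _ => ?_)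
        rw [Units.smul_def, zsmul_eq_mul, abs_mul, abs_unit_intCast, one_mul, Finset.abs_prod]
        rfl
    _ = ∑ g ∈ Finset.univ.map ⟨_, DFunLike.coe_injective⟩, ∏ i, |A i (g i)| := by
        rw [Finset.sum_map]; rfl
    _ ≤ ∑ g : ι → ι, ∏ i, |A i (g i)| :=
        Finset.sum_le_univ_sum_of_nonneg fun _ => Finset.prod_nonneg fun _ _ => abs_nonneg _

theorem det_eq_mul_det_updateRow_single [CommRing R] (A : Matrix ι ι R) {i₀ j₀ : ι}
    (h : ∀ i ≠ i₀, A i j₀ = 0) : A.det = A i₀ j₀ * (A.updateRow i₀ (Pi.single j₀ 1)).det := by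
  rw [det_eq_sum_mul_adjugate_col A j₀,
    Finset.sum_eq_single i₀ (fun i _ hi => by rw [h i hi, zero_mul]) (by simp), adjugate_apply]

theorem abs_det_le_mul_prod_erase [CommRing R] [LinearOrder R] [IsStrictOrderedRing R]
    (A : Matrix ι ι R) {i₀ j₀ : ι} (h : ∀ i ≠ i₀, A i j₀ = 0) :
    |A.det| ≤ |A i₀ j₀| * ∏ i ∈ Finset.univ.erase i₀, ∑ j, |A i j| := by
  rw [det_eq_mul_det_updateRow_single A h, abs_mul]
  refine mul_le_mul_of_nonneg_left ((abs_det_le_prod_sum_abs _).trans_eq ?_) (abs_nonneg _)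
  have h_single : ∑ j, |(Pi.single j₀ 1 : ι → R) j| = 1 := by simp [Pi.single_apply, apply_ite]
  rw [← Finset.mul_prod_erase _ _ (Finset.mem_univ i₀), updateRow_self, h_single, one_mul]
  exact Finset.prod_congr rfl fun i hi => by rw [updateRow_ne (Finset.ne_of_mem_erase hi)]

end Matrix

namespace Fin

open Finset

theorem sum_univ_ite_window {M : Type*} [AddCommMonoid M] (w : ℕ → M) {d i s : ℕ}
    (h : i + s < d) :
    ∑ j : Fin d, (if i ≤ j ∧ (j : ℕ) ≤ i + s then w (s + i - j) else 0) =
      ∑ k ∈ range (s + 1), w k := by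
  rw [sum_univ_eq_sum_range (fun j => if i ≤ j ∧ j ≤ i + s then w (s + i - j) else 0),
    ← sum_filter]
  refine sum_nbij' (fun j => s + i - j) (fun k => s + i - k) ?_ ?_ ?_ ?_ (fun _ _ => rfl) <;>
    intro a ha <;> simp only [mem_filter, mem_range] at ha ⊢ <;> omega

theorem prod_erase_ite_lt {M : Type*} [CommMonoid M] {a b : ℕ} (x y : M) {i₀ : Fin (a + b)}
    (h₀ : (i₀ : ℕ) < a) :
    ∏ i ∈ univ.erase i₀, (if (i : ℕ) < a then x else y) = x ^ (a - 1) * y ^ b := by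
  have hlt : #{i : Fin (a + b) | (i : ℕ) < a} = a := by simp [card_filter_val_lt]
  have hge := card_filter_add_card_filter_not (s := univ) fun i : Fin (a + b) => (i : ℕ) < a
  rw [card_univ, Fintype.card_fin, hlt] at hge
  rw [prod_ite, Finset.prod_const, Finset.prod_const, filter_erase,
    card_erase_of_mem (by simpa using h₀), hlt, filter_erase,
    erase_eq_of_notMem (by simpa using h₀)]
  congr
  omega

end Fin

theorem polyLength_eq_sum_range (f : ℤ[X]) {N : ℕ} (h : f.natDegree < N) :
    polyLength f = ∑ k ∈ Finset.range N, |f.coeff k| := by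
  refine Finset.sum_subset (by simpa using h) fun k _ hk => ?_
  rw [coeff_eq_zero_of_natDegree_lt (by simpa using hk), abs_zero]

theorem polyLength_derivative_le (f : ℤ[X]) :
    polyLength (derivative f) ≤ f.natDegree * polyLength f := by
  rcases Nat.eq_zero_or_pos f.natDegree with hf | hf
  · simp [derivative_of_natDegree_zero hf, polyLength, hf]
  rw [polyLength_eq_sum_range _ (natDegree_derivative_lt hf.ne')]
  calc ∑ k ∈ Finset.range f.natDegree, |(derivative f).coeff k|
      ≤ ∑ k ∈ Finset.range f.natDegree, (f.natDegree : ℤ) * |f.coeff (k + 1)| :=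
        Finset.sum_le_sum fun k hk => by
          rw [Finset.mem_range] at hk
          rw [coeff_derivative, abs_mul, mul_comm, abs_of_nonneg (by positivity)]
          gcongr
          omega
    _ ≤ f.natDegree * polyLength f := by
        rw [← Finset.mul_sum, polyLength_eq_sum_range f (Nat.lt_succ_self _),
          Finset.sum_range_succ']
        gcongr
        exact le_add_of_nonneg_right (abs_nonneg _)

section Sylvester

variable (f g : ℤ[X]) {i j : Fin (g.natDegree + f.natDegree)}

theorem sylvesterMatrix_apply_of_lt (hi : (i : ℕ) < g.natDegree) :
    sylvesterMatrix f g i j =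
      if (i : ℕ) ≤ j ∧ (j : ℕ) ≤ i + f.natDegree then f.coeff (f.natDegree + i - j) else 0 :=
  if_pos hi

theorem sylvesterMatrix_apply_of_le (hi : g.natDegree ≤ i) :
    sylvesterMatrix f g i j =
      if (i : ℕ) - g.natDegree ≤ j ∧ (j : ℕ) ≤ i - g.natDegree + g.natDegree then
        g.coeff (g.natDegree + (i - g.natDegree) - j)
      else 0 :=
  if_neg hi.not_gt

theorem sylvesterMatrix_apply_zero_zero (hg : 0 < g.natDegree) (hi : (i : ℕ) = 0)
    (hj : (j : ℕ) = 0) : sylvesterMatrix f g i j = f.leadingCoeff := by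
  rw [sylvesterMatrix_apply_of_lt f g (by omega), if_pos (by omega), hi, hj, add_zero,
    Nat.sub_zero, leadingCoeff]

theorem sylvesterMatrix_eq_zero_of_add_natDegree_lt (hi : (i : ℕ) < g.natDegree)
    (hj : (i : ℕ) + f.natDegree < j) : sylvesterMatrix f g i j = 0 := by
  rw [sylvesterMatrix_apply_of_lt f g hi, if_neg (by omega)]

theorem sylvesterMatrix_col_zero_eq_zero (hj : (j : ℕ) = 0) (hi₀ : (i : ℕ) ≠ 0)
    (hi : (i : ℕ) ≠ g.natDegree) : sylvesterMatrix f g i j = 0 := by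
  rcases lt_or_ge (i : ℕ) g.natDegree with hlt | hle
  · rw [sylvesterMatrix_apply_of_lt f g hlt, if_neg (by omega)]
  · rw [sylvesterMatrix_apply_of_le f g hle, if_neg (by omega)]

theorem sum_abs_sylvesterMatrix_of_lt (hi : (i : ℕ) < g.natDegree) :
    ∑ j, |sylvesterMatrix f g i j| = polyLength f := by
  simp_rw [sylvesterMatrix_apply_of_lt f g hi, apply_ite abs, abs_zero]
  exact Fin.sum_univ_ite_window (fun k => |f.coeff k|) (by omega)

theorem sum_abs_sylvesterMatrix_of_le (hi : g.natDegree ≤ i) :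
    ∑ j, |sylvesterMatrix f g i j| = polyLength g := by
  simp_rw [sylvesterMatrix_apply_of_le f g hi, apply_ite abs, abs_zero]
  exact Fin.sum_univ_ite_window (fun k => |g.coeff k|) (by omega)

end Sylvester

section Derivative

variable {f : ℤ[X]} {i₀ i₁ : Fin ((derivative f).natDegree + f.natDegree)}

theorem sylvesterMatrix_derivative_apply (hf : 2 ≤ f.natDegree) (h₀ : (i₀ : ℕ) = 0)
    (h₁ : (i₁ : ℕ) = f.natDegree - 1) (j : Fin ((derivative f).natDegree + f.natDegree)) :
    sylvesterMatrix f (derivative f) i₁ j =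
      (f.natDegree - j : ℤ) * sylvesterMatrix f (derivative f) i₀ j := by
  have hd : (derivative f).natDegree = f.natDegree - 1 := natDegree_derivative f
  rw [sylvesterMatrix_apply_of_le _ _ (by omega), sylvesterMatrix_apply_of_lt _ _ (by omega)]
  simp only [hd, h₀, h₁, Nat.sub_self, zero_add, zero_le, true_and, coeff_derivative, add_zero]
  split_ifs with h h'
  · rw [show f.natDegree - 1 - j + 1 = f.natDegree - j by omega]
    push_cast [Nat.cast_sub h, Nat.cast_sub h', Nat.cast_sub (by omega : 1 ≤ f.natDegree)]
    ring
  · omega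
  · rw [show (j : ℕ) = f.natDegree by omega, sub_self, zero_mul]
  · rw [mul_zero]

variable (f i₀ i₁) in
/-- With `i₀ = 0` and `i₁ = n - 1`: the first `f'`-row minus `n` times the first `f`-row. -/
noncomputable def reducedSylvesterMatrix :
    Matrix (Fin ((derivative f).natDegree + f.natDegree))
      (Fin ((derivative f).natDegree + f.natDegree)) ℤ :=
  (sylvesterMatrix f (derivative f)).updateRow i₁
    (sylvesterMatrix f (derivative f) i₁ - (f.natDegree : ℤ) • sylvesterMatrix f (derivative f) i₀)

theorem det_reducedSylvesterMatrix (h : i₁ ≠ i₀) :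
    (reducedSylvesterMatrix f i₀ i₁).det = _root_.resultant f (derivative f) := by
  rw [reducedSylvesterMatrix, sub_eq_add_neg, ← neg_smul, det_updateRow_add_smul_self _ h]
  rfl

theorem reducedSylvesterMatrix_apply_of_ne {i : Fin ((derivative f).natDegree + f.natDegree)}
    (hi : i ≠ i₁) (j : Fin ((derivative f).natDegree + f.natDegree)) :
    reducedSylvesterMatrix f i₀ i₁ i j = sylvesterMatrix f (derivative f) i j := by
  rw [reducedSylvesterMatrix, updateRow_ne hi]

theorem reducedSylvesterMatrix_apply_self (hf : 2 ≤ f.natDegree) (h₀ : (i₀ : ℕ) = 0)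
    (h₁ : (i₁ : ℕ) = f.natDegree - 1) (j : Fin ((derivative f).natDegree + f.natDegree)) :
    reducedSylvesterMatrix f i₀ i₁ i₁ j = -(j * sylvesterMatrix f (derivative f) i₀ j) := by
  rw [reducedSylvesterMatrix, updateRow_self, Pi.sub_apply, Pi.smul_apply, smul_eq_mul,
    sylvesterMatrix_derivative_apply hf h₀ h₁]
  ring

theorem reducedSylvesterMatrix_col_zero_eq_zero (hf : 2 ≤ f.natDegree) (h₀ : (i₀ : ℕ) = 0)
    (h₁ : (i₁ : ℕ) = f.natDegree - 1) {i : Fin ((derivative f).natDegree + f.natDegree)}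
    (hi : i ≠ i₀) : reducedSylvesterMatrix f i₀ i₁ i i₀ = 0 := by
  have hd : (derivative f).natDegree = f.natDegree - 1 := natDegree_derivative f
  by_cases hi₁ : i = i₁
  · rw [hi₁, reducedSylvesterMatrix_apply_self hf h₀ h₁, h₀, Nat.cast_zero, zero_mul, neg_zero]
  rw [reducedSylvesterMatrix_apply_of_ne hi₁]
  exact sylvesterMatrix_col_zero_eq_zero _ _ h₀ (fun h => hi (Fin.ext (h.trans h₀.symm)))
    (fun h => hi₁ (Fin.ext (h.trans (hd.trans h₁.symm))))

theorem sum_abs_reducedSylvesterMatrix_self_le (hf : 2 ≤ f.natDegree) (h₀ : (i₀ : ℕ) = 0)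
    (h₁ : (i₁ : ℕ) = f.natDegree - 1) :
    ∑ j, |reducedSylvesterMatrix f i₀ i₁ i₁ j| ≤ f.natDegree * polyLength f := by
  have hd : (derivative f).natDegree = f.natDegree - 1 := natDegree_derivative f
  rw [← sum_abs_sylvesterMatrix_of_lt f (derivative f) (i := i₀) (by omega), Finset.mul_sum]
  refine Finset.sum_le_sum fun j _ => ?_
  rw [reducedSylvesterMatrix_apply_self hf h₀ h₁, abs_neg, abs_mul, Int.abs_natCast]
  by_cases hj : (j : ℕ) ≤ f.natDegree
  · gcongr
  · rw [sylvesterMatrix_eq_zero_of_add_natDegree_lt _ _ (by omega) (by omega), abs_zero,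
      mul_zero, mul_zero]

theorem sum_abs_reducedSylvesterMatrix_le (hf : 2 ≤ f.natDegree) (h₀ : (i₀ : ℕ) = 0)
    (h₁ : (i₁ : ℕ) = f.natDegree - 1) (i : Fin ((derivative f).natDegree + f.natDegree)) :
    ∑ j, |reducedSylvesterMatrix f i₀ i₁ i j| ≤
      if (i : ℕ) < (derivative f).natDegree then polyLength f else f.natDegree * polyLength f := by
  have hd : (derivative f).natDegree = f.natDegree - 1 := natDegree_derivative f
  by_cases hi₁ : i = i₁
  · rw [hi₁, if_neg (by omega)]
    exact sum_abs_reducedSylvesterMatrix_self_le hf h₀ h₁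
  simp_rw [reducedSylvesterMatrix_apply_of_ne hi₁]
  split_ifs with h
  · exact (sum_abs_sylvesterMatrix_of_lt _ _ h).le
  · exact (sum_abs_sylvesterMatrix_of_le _ _ (not_lt.1 h)).trans_le (polyLength_derivative_le f)

theorem abs_resultant_derivative_le (hf : 2 ≤ f.natDegree) (h₀ : (i₀ : ℕ) = 0)
    (h₁ : (i₁ : ℕ) = f.natDegree - 1) :
    |_root_.resultant f (derivative f)| ≤ |f.leadingCoeff| * ∏ i ∈ Finset.univ.erase i₀,
      (if (i : ℕ) < (derivative f).natDegree then polyLength f else f.natDegree * polyLength f) := by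
  have hd : (derivative f).natDegree = f.natDegree - 1 := natDegree_derivative f
  have hpivot : reducedSylvesterMatrix f i₀ i₁ i₀ i₀ = f.leadingCoeff := by
    rw [reducedSylvesterMatrix_apply_of_ne (Fin.ne_of_val_ne (by omega) : i₀ ≠ i₁),
      sylvesterMatrix_apply_zero_zero _ _ (by omega) h₀ h₀]
  rw [← det_reducedSylvesterMatrix (Fin.ne_of_val_ne (by omega) : i₁ ≠ i₀), ← hpivot]
  refine (abs_det_le_mul_prod_erase _
    fun i => reducedSylvesterMatrix_col_zero_eq_zero hf h₀ h₁).trans ?_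
  gcongr with i
  exact sum_abs_reducedSylvesterMatrix_le hf h₀ h₁ i

end Derivative

/-- Mahler's bound: for `f ∈ ℤ[x]` of degree `n ≥ 2`,
`|Res(f, f')| ≤ |aₙ| · nⁿ · L(f)^(2n-2)`. -/
theorem abs_resultant_le (n : ℕ) (hn : 2 ≤ n) (f : Polynomial ℤ) (hdeg : f.natDegree = n) :
    |_root_.resultant f (derivative f)| ≤ |f.leadingCoeff| * (n : ℤ)^n * (polyLength f)^(2*n - 2) := by
  subst hdeg
  have hd : (derivative f).natDegree = f.natDegree - 1 := natDegree_derivative f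
  calc |_root_.resultant f (derivative f)|
      ≤ |f.leadingCoeff| * ∏ i ∈ Finset.univ.erase (⟨0, by omega⟩ : Fin _),
        (if (i : ℕ) < (derivative f).natDegree then polyLength f else f.natDegree * polyLength f) :=
        abs_resultant_derivative_le (i₁ := ⟨f.natDegree - 1, by omega⟩) hn rfl rfl
    _ = |f.leadingCoeff| * f.natDegree ^ f.natDegree * polyLength f ^ (2 * f.natDegree - 2) := by
        rw [Fin.prod_erase_ite_lt _ _ (show 0 < (derivative f).natDegree by omega), hd, mul_pow,
          show 2 * f.natDegree - 2 = f.natDegree - 1 - 1 + f.natDegree by omega, pow_add]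
        ring
end

section
/- For every integer n ≥ 2, ρ_n − τ_n > 0, i.e. τ_n < ρ_n. -/
/-!
Write `S = ∑_p (p-1)²/pⁿ⁺²`. Dropping the second sum gives `τₙ ≤ S²`, while `1 - x ≤ e⁻ˣ` turns
the product into `∏_p (1 - (p-1)²/pⁿ⁺²) ≤ e⁻ˢ ≤ 1 - S + S²/2`, so `ρₙ ≥ S - S²/2`. Hence it
suffices that `0 < S < 2/3`, and for `n ≥ 2` each term is at most `1/p²`, so
`S ≤ ∑_{k ≥ 2} 1/k² = π²/6 - 1 < 2/3`.
-/

open Polynomial Filter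

/-- `ρₙ = 1 - ∏_p (1 - (p-1)²/pⁿ⁺²)`, the product running over all primes. -/
noncomputable def rho (n : ℕ) : ℝ :=
  1 - ∏' p : Nat.Primes, (1 - ((p : ℕ) - 1 : ℝ)^2 / ((p : ℕ) : ℝ)^(n + 2))
/-- `τₙ = (∑_p (p-1)²/pⁿ⁺²)² - ∑_p (p-1)⁴/p²ⁿ⁺⁴`, the sums running over all primes. -/
noncomputable def tau (n : ℕ) : ℝ :=
  (∑' p : Nat.Primes, ((p : ℕ) - 1 : ℝ)^2 / ((p : ℕ) : ℝ)^(n + 2))^2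
    - ∑' p : Nat.Primes, ((p : ℕ) - 1 : ℝ)^4 / ((p : ℕ) : ℝ)^(2*n + 4)

open Real

namespace Real

theorem exp_neg_le_one_sub_add_sq_div_two {x : ℝ} (hx : 0 ≤ x) :
    exp (-x) ≤ 1 - x + x ^ 2 / 2 := by
  have hquad : 1 + x + x ^ 2 / 2 ≤ exp x := quadratic_le_exp_of_nonneg hx
  -- `(1 - x + x²/2)(1 + x + x²/2) = 1 + x⁴/4`
  have hprod : 1 ≤ (1 - x + x ^ 2 / 2) * exp x := by
    nlinarith [sq_nonneg (x - 1), pow_nonneg hx 4]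
  rwa [exp_neg, inv_le_iff_one_le_mul₀ (exp_pos x)]

theorem tprod_one_sub_le_exp_neg_tsum {ι : Type*} {f : ι → ℝ} (hf1 : ∀ i, f i < 1)
    (hf : Summable f) : ∏' i, (1 - f i) ≤ exp (-∑' i, f i) := by
  have hpos : ∀ i, 0 < 1 - f i := fun i ↦ sub_pos.2 (hf1 i)
  have hlog : Summable fun i ↦ log (1 - f i) := by
    simpa [sub_eq_add_neg] using summable_log_one_add_of_summable hf.neg
  rw [← rexp_tsum_eq_tprod hpos hlog, ← tsum_neg]
  exact exp_le_exp.2 <| hlog.tsum_le_tsum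
    (fun i ↦ by linarith [log_le_sub_one_of_pos (hpos i)]) hf.neg

theorem tsum_sub_sq_div_two_le_one_sub_tprod_one_sub {ι : Type*} {f : ι → ℝ}
    (hf0 : ∀ i, 0 ≤ f i) (hf1 : ∀ i, f i < 1) (hf : Summable f) :
    ∑' i, f i - (∑' i, f i) ^ 2 / 2 ≤ 1 - ∏' i, (1 - f i) := by
  have := (tprod_one_sub_le_exp_neg_tsum hf1 hf).trans
    (exp_neg_le_one_sub_add_sq_div_two (tsum_nonneg hf0))
  linarith

end Real

theorem Nat.Primes.summable_one_div_sq :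
    Summable fun p : Nat.Primes ↦ 1 / ((p : ℕ) : ℝ) ^ 2 :=
  (Real.summable_one_div_nat_pow.2 one_lt_two).comp_injective Nat.Primes.coe_nat_injective

theorem Nat.Primes.tsum_one_div_sq_le :
    ∑' p : Nat.Primes, 1 / ((p : ℕ) : ℝ) ^ 2 ≤ π ^ 2 / 6 - 1 := by
  set g : ℕ → ℝ := fun k ↦ 1 / (k : ℝ) ^ 2 - if k = 1 then 1 else 0
  have hg : HasSum g (π ^ 2 / 6 - 1) := hasSum_zeta_two.sub (hasSum_ite_eq 1 1)
  have hg0 : ∀ k, 0 ≤ g k := by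
    intro k
    rcases eq_or_ne k 1 with rfl | hk
    · simp [g]
    · simp [g, hk]
  rw [← hg.tsum_eq]
  refine Summable.tsum_le_tsum_of_inj _ Nat.Primes.coe_nat_injective (fun k _ ↦ hg0 k)
    (fun p ↦ ?_) Nat.Primes.summable_one_div_sq hg.summable
  simp [g, p.prop.one_lt.ne']

noncomputable def primeWeight (n : ℕ) (p : Nat.Primes) : ℝ :=
  ((p : ℕ) - 1 : ℝ) ^ 2 / ((p : ℕ) : ℝ) ^ (n + 2)

section primeWeight

variable {n : ℕ}

theorem primeWeight_nonneg (p : Nat.Primes) : 0 ≤ primeWeight n p := by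
  unfold primeWeight; positivity

theorem primeWeight_lt_one (p : Nat.Primes) : primeWeight n p < 1 := by
  have hp : (1 : ℝ) < (p : ℕ) := by exact_mod_cast p.prop.one_lt
  rw [primeWeight, div_lt_one (by positivity)]
  calc ((p : ℕ) - 1 : ℝ) ^ 2 < ((p : ℕ) : ℝ) ^ 2 := by gcongr; linarith
    _ ≤ ((p : ℕ) : ℝ) ^ (n + 2) := pow_le_pow_right₀ hp.le (by omega)

theorem primeWeight_le_one_div_sq (hn : 2 ≤ n) (p : Nat.Primes) :
    primeWeight n p ≤ 1 / ((p : ℕ) : ℝ) ^ 2 := by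
  have hp : (1 : ℝ) < (p : ℕ) := by exact_mod_cast p.prop.one_lt
  rw [primeWeight, div_le_div_iff₀ (by positivity) (by positivity), one_mul]
  calc ((p : ℕ) - 1 : ℝ) ^ 2 * ((p : ℕ) : ℝ) ^ 2 ≤ ((p : ℕ) : ℝ) ^ 2 * ((p : ℕ) : ℝ) ^ 2 := by
        gcongr; linarith
    _ = ((p : ℕ) : ℝ) ^ 4 := by ring
    _ ≤ ((p : ℕ) : ℝ) ^ (n + 2) := pow_le_pow_right₀ hp.le (by omega)

theorem summable_primeWeight (hn : 2 ≤ n) : Summable (primeWeight n) :=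
  .of_nonneg_of_le primeWeight_nonneg (primeWeight_le_one_div_sq hn)
    Nat.Primes.summable_one_div_sq

theorem tsum_primeWeight_pos (hn : 2 ≤ n) : 0 < ∑' p, primeWeight n p :=
  (summable_primeWeight hn).tsum_pos primeWeight_nonneg ⟨2, Nat.prime_two⟩
    (by simp [primeWeight])

theorem tsum_primeWeight_lt_two_thirds (hn : 2 ≤ n) : ∑' p, primeWeight n p < 2 / 3 := by
  have hle : ∑' p, primeWeight n p ≤ π ^ 2 / 6 - 1 :=
    ((summable_primeWeight hn).tsum_le_tsum (primeWeight_le_one_div_sq hn)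
      Nat.Primes.summable_one_div_sq).trans Nat.Primes.tsum_one_div_sq_le
  nlinarith [pi_lt_d2, pi_pos]

end primeWeight

theorem tau_le_sq_tsum_primeWeight (n : ℕ) : tau n ≤ (∑' p, primeWeight n p) ^ 2 :=
  sub_le_self _ (tsum_nonneg fun p ↦ by positivity)

theorem tsum_primeWeight_sub_le_rho {n : ℕ} (hn : 2 ≤ n) :
    ∑' p, primeWeight n p - (∑' p, primeWeight n p) ^ 2 / 2 ≤ rho n :=
  tsum_sub_sq_div_two_le_one_sub_tprod_one_sub primeWeight_nonneg primeWeight_lt_one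
    (summable_primeWeight hn)

/-- For every `n ≥ 2`, `ρₙ - τₙ > 0`. -/
theorem tau_lt_rho (n : ℕ) (hn : 2 ≤ n) : tau n < rho n := by
  set S := ∑' p, primeWeight n p
  have hS0 : 0 < S := tsum_primeWeight_pos hn
  have hS1 : S < 2 / 3 := tsum_primeWeight_lt_two_thirds hn
  calc tau n ≤ S ^ 2 := tau_le_sq_tsum_primeWeight n
    _ < S - S ^ 2 / 2 := by nlinarith
    _ ≤ rho n := tsum_primeWeight_sub_le_rho hn
end

section
/- For every integer n ≥ 2, the set of polynomials of degree n over ℤ that are irreducible but are not shifted Eisenstein polynomials is infinite. -/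
open Polynomial Filter

/-!
If `f(X + s)` is Eisenstein at `p`, then `f ≡ c (X - s)ⁿ (mod p)` with `p ∤ c`. For `q ≡ 2 (mod 4)`
the polynomials `q Xⁿ + q X + 1` (`n ≥ 3`) and `q X² + 1` are irreducible, since their reverses
`Xⁿ + q Xⁿ⁻¹ + q` and `X² + q` are Eisenstein at `2`. Neither is congruent to `c (X - s)ⁿ`
modulo a `p ∤ q`: for the first, the coefficients of `Xⁿ⁻¹` and `X` would give `n s = 0` and
`1 = n (-s)ⁿ⁻¹`; for the second (where `p` is odd because `q` is even), those of `X` and `1`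
give `2 c s = 0` and `1 = c s²`.
-/

namespace Polynomial

section IsDomain

variable {R : Type*} [CommRing R] [IsDomain R]

theorem isUnit_of_isUnit_reverse {f : R[X]} (h0 : f.coeff 0 ≠ 0) (hf : IsUnit f.reverse) :
    IsUnit f := by
  have hdeg : f.natDegree = 0 := by
    simpa [reverse_natDegree, natTrailingDegree_eq_zero.2 (Or.inr h0)] using
      natDegree_eq_zero_of_isUnit hf
  rw [eq_C_of_natDegree_eq_zero hdeg] at hf ⊢
  simpa using hf

theorem irreducible_of_irreducible_reverse {f : R[X]} (h0 : f.coeff 0 ≠ 0)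
    (hf : Irreducible f.reverse) : Irreducible f where
  not_isUnit hu := hf.not_isUnit <| by
    obtain ⟨r, hr, rfl⟩ := Polynomial.isUnit_iff.1 hu
    simpa using hr
  isUnit_or_isUnit g h hgh := by
    subst hgh
    rw [mul_coeff_zero] at h0
    exact (hf.isUnit_or_isUnit (reverse_mul_of_domain g h)).imp
      (isUnit_of_isUnit_reverse (left_ne_zero_of_mul h0))
      (isUnit_of_isUnit_reverse (right_ne_zero_of_mul h0))

end IsDomain

section NoZeroDivisors

variable {R : Type*} [Semiring R] [NoZeroDivisors R] [Nontrivial R]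

theorem natDegree_comp_X_add_C (f : R[X]) (s : R) :
    (f.comp (X + C s)).natDegree = f.natDegree := by
  rw [natDegree_comp, natDegree_X_add_C, mul_one]

theorem leadingCoeff_comp_X_add_C (f : R[X]) (s : R) :
    (f.comp (X + C s)).leadingCoeff = f.leadingCoeff := by
  rw [leadingCoeff_comp (by rw [natDegree_X_add_C]; exact one_ne_zero), leadingCoeff_X_add_C,
    one_pow, mul_one]

end NoZeroDivisors

section CommRing

variable {R : Type*} [CommRing R]

theorem coeff_X_sub_C_pow (a : R) (n k : ℕ) :
    ((X - C a) ^ n).coeff k = (-a) ^ (n - k) * n.choose k := by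
  rw [sub_eq_add_neg, ← C_neg, coeff_X_add_C_pow]

theorem C_mul_X_pow_add_C_mul_X_add_one_ne {q : R} (hq : q ≠ 0) {n : ℕ} (hn : 3 ≤ n)
    (c a : R) : C q * X ^ n + C q * X + 1 ≠ C c * (X - C a) ^ n := by
  obtain ⟨m, rfl⟩ : ∃ m, n = m + 3 := ⟨n - 3, by omega⟩
  intro h
  have hcoeff (k : ℕ) := congrArg (coeff · k) h
  have subleading : c * (a * (m + 2 + 1)) = 0 := by
    simpa [coeff_one, coeff_X_sub_C_pow, coeff_X_pow, Nat.choose_succ_self_right]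
      using hcoeff (m + 2)
  have linear : q = c * ((-a) ^ (m + 2) * (m + 3)) := by
    simpa [coeff_X, coeff_one, coeff_X_sub_C_pow, coeff_X_pow] using hcoeff 1
  exact hq (by linear_combination linear - (-a) ^ (m + 1) * subleading)

theorem C_mul_X_sq_add_one_ne (h2 : (2 : R) ≠ 0) (q c a : R) :
    C q * X ^ 2 + 1 ≠ C c * (X - C a) ^ 2 := by
  intro h
  have hcoeff (k : ℕ) := congrArg (coeff · k) h
  have linear : 0 = c * (-a * 2) := by
    simpa [coeff_one, coeff_X_sub_C_pow, coeff_X_pow] using hcoeff 1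
  have constant : 1 = c * a ^ 2 := by
    simpa [coeff_one, coeff_X_sub_C_pow, coeff_X_pow] using hcoeff 0
  exact h2 (by linear_combination 2 * constant + a * linear)

end CommRing

end Polynomial

theorem IsEisensteinWith.irreducible {f : ℤ[X]} {p : ℕ} (hf : IsEisensteinWith f p)
    (hp : p.Prime) (hu : f.IsPrimitive) (hd : 0 < f.natDegree) : Irreducible f := by
  have hpZ : Prime (p : ℤ) := Nat.prime_iff_prime_int.mp hp
  have hE : f.IsEisensteinAt (Ideal.span {(p : ℤ)}) := by
    refine ⟨?_, fun hi => ?_, ?_⟩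
    · rw [Ideal.mem_span_singleton]; exact hf.2.2
    · rw [Ideal.mem_span_singleton]; exact hf.1 _ hi
    · rw [Ideal.span_singleton_pow, Ideal.mem_span_singleton]; exact hf.2.1
  exact hE.irreducible ((Ideal.span_singleton_prime hpZ.ne_zero).2 hpZ) hu hd

theorem irreducible_X_pow_add_C_mul {p : ℕ} (hp : p.Prime) {q : ℤ} (hpq : (p : ℤ) ∣ q)
    (hpq2 : ¬ (p : ℤ) ^ 2 ∣ q) {n : ℕ} {h : ℤ[X]} (hdeg : h.natDegree < n)
    (h0 : h.coeff 0 = 1) : Irreducible (X ^ n + C q * h) := by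
  have hlt : (C q * h).degree < n :=
    degree_le_natDegree.trans_lt (by exact_mod_cast (natDegree_C_mul_le q h).trans_lt hdeg)
  have hmonic : (X ^ n + C q * h).Monic := monic_X_pow_add hlt
  have hnat : (X ^ n + C q * h).natDegree = n := by
    rw [natDegree_add_eq_left_of_degree_lt (by rwa [degree_X_pow]), natDegree_X_pow]
  refine IsEisensteinWith.irreducible ⟨fun i hi => ?_, ?_, ?_⟩ hp hmonic.isPrimitive (by omega)
  · rw [hnat] at hi
    simp [coeff_X_pow, hi.ne, Dvd.dvd.mul_right hpq]
  · rwa [coeff_add, coeff_X_pow, if_neg (by omega), coeff_C_mul, h0, zero_add, mul_one]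
  · rw [hmonic.leadingCoeff]
    exact (Nat.prime_iff_prime_int.mp hp).not_dvd_one

theorem map_eq_C_mul_X_pow_of_dvd_coeff {g : ℤ[X]} {p : ℕ}
    (h : ∀ i < g.natDegree, (p : ℤ) ∣ g.coeff i) :
    g.map (Int.castRingHom (ZMod p)) = C (g.leadingCoeff : ZMod p) * X ^ g.natDegree := by
  ext i
  rw [coeff_map, coeff_C_mul_X_pow]
  rcases lt_trichotomy i g.natDegree with hi | rfl | hi
  · simpa [hi.ne, ZMod.intCast_zmod_eq_zero_iff_dvd] using h i hi
  · rw [if_pos rfl]; rfl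
  · simp [hi.ne', coeff_eq_zero_of_natDegree_lt hi]

theorem map_eq_C_mul_X_sub_C_pow_of_dvd_coeff_comp {f : ℤ[X]} {p : ℕ} {s : ℤ}
    (h : ∀ i < (f.comp (X + C s)).natDegree, (p : ℤ) ∣ (f.comp (X + C s)).coeff i) :
    f.map (Int.castRingHom (ZMod p)) =
      C (f.leadingCoeff : ZMod p) * (X - C (s : ZMod p)) ^ f.natDegree := by
  have hshift := map_eq_C_mul_X_pow_of_dvd_coeff h
  rw [map_comp, natDegree_comp_X_add_C, leadingCoeff_comp_X_add_C] at hshift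
  set φ := Int.castRingHom (ZMod p)
  calc f.map φ = ((f.map φ).comp (X + C (s : ZMod p))).comp (X - C (s : ZMod p)) := by
        rw [comp_assoc]; simp
    _ = _ := by
        rw [show X + C (s : ZMod p) = (X + C s).map φ by simp [φ], hshift]
        simp

theorem not_exists_isEisenstein_comp {f : ℤ[X]}
    (hf : ∀ p : ℕ, ¬ (p : ℤ) ∣ f.leadingCoeff → ∀ a : ZMod p,
      f.map (Int.castRingHom (ZMod p)) ≠ C (f.leadingCoeff : ZMod p) * (X - C a) ^ f.natDegree) :
    ¬ ∃ s : ℤ, IsEisenstein (f.comp (X + C s)) := by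
  rintro ⟨s, p, -, hdvd, -, hlc⟩
  refine hf p ?_ s (map_eq_C_mul_X_sub_C_pow_of_dvd_coeff_comp hdvd)
  rwa [leadingCoeff_comp_X_add_C] at hlc

section Families

variable {q : ℤ}

theorem reverse_C_mul_X_pow_add_C_mul_X_add_one (hq : q ≠ 0) {n : ℕ} (hn : 2 ≤ n) :
    (C q * X ^ n + C q * X + 1).reverse = X ^ n + C q * (X ^ (n - 1) + 1) := by
  obtain ⟨m, rfl⟩ : ∃ m, n = m + 1 := ⟨n - 1, by omega⟩
  have hm : m ≠ 0 := by omega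
  have hsplit : C q * X ^ (m + 1) + C q * X + 1 = X * (C q * X ^ m + C q) + C 1 := by
    rw [C_1]; ring
  have hdeg : (C q * X ^ m + C q).natDegree = m := by
    rw [natDegree_add_C, natDegree_C_mul_X_pow _ _ hq]
  have hne : C q * X ^ m + C q ≠ 0 := ne_zero_of_natDegree_gt (n := 0) (by omega)
  rw [hsplit, reverse_add_C, reverse_X_mul, reverse_add_C, reverse_mul_X_pow, reverse_C,
    natDegree_X_mul hne, hdeg, natDegree_C_mul_X_pow _ _ hq]
  simp only [map_one, one_mul, Nat.add_sub_cancel]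
  ring

theorem natDegree_C_mul_X_pow_add_C_mul_X_add_one (hq : q ≠ 0) {n : ℕ} (hn : 2 ≤ n) :
    (C q * X ^ n + C q * X + 1).natDegree = n := by
  have h0 : n ≠ 0 := by omega
  have h1 : n ≠ 1 := by omega
  compute_degree
  · simpa [h0, h1] using hq
  all_goals omega

theorem leadingCoeff_C_mul_X_pow_add_C_mul_X_add_one (hq : q ≠ 0) {n : ℕ} (hn : 2 ≤ n) :
    (C q * X ^ n + C q * X + 1).leadingCoeff = q := by
  have h0 : n ≠ 0 := by omega
  have h1 : 1 ≠ n := by omega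
  rw [leadingCoeff, natDegree_C_mul_X_pow_add_C_mul_X_add_one hq hn]
  simp [coeff_X, coeff_one, h0, h1]

theorem irreducible_C_mul_X_pow_add_C_mul_X_add_one {p : ℕ} (hp : p.Prime) (hpq : (p : ℤ) ∣ q)
    (hpq2 : ¬ (p : ℤ) ^ 2 ∣ q) {n : ℕ} (hn : 2 ≤ n) :
    Irreducible (C q * X ^ n + C q * X + 1) := by
  have hq : q ≠ 0 := by rintro rfl; exact hpq2 (dvd_zero _)
  have h0 : n ≠ 0 := by omega
  have h1 : n - 1 ≠ 0 := by omega
  refine irreducible_of_irreducible_reverse (by simp [coeff_zero_eq_eval_zero, h0]) ?_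
  rw [reverse_C_mul_X_pow_add_C_mul_X_add_one hq hn]
  exact irreducible_X_pow_add_C_mul hp hpq hpq2 (by compute_degree!; omega)
    (by simp [coeff_zero_eq_eval_zero, h1])

theorem not_exists_isEisenstein_comp_C_mul_X_pow_add_C_mul_X_add_one (hq : q ≠ 0) {n : ℕ}
    (hn : 3 ≤ n) : ¬ ∃ s : ℤ, IsEisenstein ((C q * X ^ n + C q * X + 1).comp (X + C s)) := by
  refine not_exists_isEisenstein_comp fun p hpq a => ?_
  rw [leadingCoeff_C_mul_X_pow_add_C_mul_X_add_one hq (by omega)] at hpq ⊢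
  rw [natDegree_C_mul_X_pow_add_C_mul_X_add_one hq (by omega)]
  have hq' : (q : ZMod p) ≠ 0 := by rwa [ne_eq, ZMod.intCast_zmod_eq_zero_iff_dvd]
  simpa using C_mul_X_pow_add_C_mul_X_add_one_ne hq' hn (q : ZMod p) a

theorem reverse_C_mul_X_sq_add_one (hq : q ≠ 0) :
    (C q * X ^ 2 + 1).reverse = X ^ 2 + C q := by
  rw [← C_1, reverse_add_C, reverse_mul_X_pow, reverse_C, natDegree_C_mul_X_pow _ _ hq]
  simp [add_comm]

theorem natDegree_C_mul_X_sq_add_one (hq : q ≠ 0) : (C q * X ^ 2 + 1).natDegree = 2 := by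
  compute_degree!

theorem leadingCoeff_C_mul_X_sq_add_one (hq : q ≠ 0) : (C q * X ^ 2 + 1).leadingCoeff = q := by
  rw [leadingCoeff, natDegree_C_mul_X_sq_add_one hq]
  simp [coeff_one]

theorem irreducible_C_mul_X_sq_add_one {p : ℕ} (hp : p.Prime) (hpq : (p : ℤ) ∣ q)
    (hpq2 : ¬ (p : ℤ) ^ 2 ∣ q) : Irreducible (C q * X ^ 2 + 1) := by
  have hq : q ≠ 0 := by rintro rfl; exact hpq2 (dvd_zero _)
  refine irreducible_of_irreducible_reverse (by simp [coeff_zero_eq_eval_zero]) ?_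
  rw [reverse_C_mul_X_sq_add_one hq, ← mul_one (C q)]
  exact irreducible_X_pow_add_C_mul hp hpq hpq2 (by simp) coeff_one_zero

theorem not_exists_isEisenstein_comp_C_mul_X_sq_add_one (hq : q ≠ 0) (h2q : 2 ∣ q) :
    ¬ ∃ s : ℤ, IsEisenstein ((C q * X ^ 2 + 1).comp (X + C s)) := by
  refine not_exists_isEisenstein_comp fun p hpq a => ?_
  rw [leadingCoeff_C_mul_X_sq_add_one hq] at hpq ⊢
  rw [natDegree_C_mul_X_sq_add_one hq]
  have h2 : (2 : ZMod p) ≠ 0 := by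
    intro h
    exact hpq (((ZMod.intCast_zmod_eq_zero_iff_dvd 2 p).1 (by exact_mod_cast h)).trans h2q)
  simpa using C_mul_X_sq_add_one_ne h2 (q : ZMod p) (q : ZMod p) a

end Families

/-- For every `n ≥ 2`, the set of irreducible polynomials of degree `n` over `ℤ` that are not
shifted Eisenstein polynomials is infinite. -/
theorem irreducible_not_shifted_eisenstein_infinite (n : ℕ) (hn : 2 ≤ n) :
    {f : Polynomial ℤ | f.natDegree = n ∧ Irreducible f ∧
      ¬ ∃ s : ℤ, IsEisenstein (f.comp (X + C s))}.Infinite := by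
  have two_dvd (k : ℕ) : ((2 : ℕ) : ℤ) ∣ 4 * k + 2 := ⟨2 * k + 1, by ring⟩
  have four_not_dvd (k : ℕ) : ¬ ((2 : ℕ) : ℤ) ^ 2 ∣ 4 * k + 2 := by push_cast; omega
  have ne_zero (k : ℕ) : (4 * k + 2 : ℤ) ≠ 0 := by omega
  rcases hn.eq_or_lt with rfl | hn3
  · refine Set.infinite_of_injective_forall_mem
      (f := fun k : ℕ => C (4 * k + 2 : ℤ) * X ^ 2 + 1) (fun a b h => ?_) fun k =>
        ⟨natDegree_C_mul_X_sq_add_one (ne_zero k),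
          irreducible_C_mul_X_sq_add_one Nat.prime_two (two_dvd k) (four_not_dvd k),
          not_exists_isEisenstein_comp_C_mul_X_sq_add_one (ne_zero k) (two_dvd k)⟩
    have hlc := congrArg leadingCoeff h
    simp only [leadingCoeff_C_mul_X_sq_add_one (ne_zero _)] at hlc
    omega
  · refine Set.infinite_of_injective_forall_mem
      (f := fun k : ℕ => C (4 * k + 2 : ℤ) * X ^ n + C (4 * k + 2 : ℤ) * X + 1)
      (fun a b h => ?_) fun k =>
        ⟨natDegree_C_mul_X_pow_add_C_mul_X_add_one (ne_zero k) hn,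
          irreducible_C_mul_X_pow_add_C_mul_X_add_one Nat.prime_two (two_dvd k) (four_not_dvd k) hn,
          not_exists_isEisenstein_comp_C_mul_X_pow_add_C_mul_X_add_one (ne_zero k) hn3⟩
    have hlc := congrArg leadingCoeff h
    simp only [leadingCoeff_C_mul_X_pow_add_C_mul_X_add_one (ne_zero _) hn] at hlc
    omega
end

section
/- For every integer n > 2, liminf_{H→∞} #(I_n(H) \ C̄_n(H)) / #I_n(H) > 0. -/
open Polynomial Filter

/-- Height of an integer polynomial: the maximum of the absolute values of its coefficients. -/
def polyHeight (f : Polynomial ℤ) : ℕ :=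
  (Finset.range (f.natDegree + 1)).sup fun i => (f.coeff i).natAbs

/-- `C̄_n(H)`: polynomials `f` of degree exactly `n` and height at most `H` such that `f(x+s)`
is Eisenstein and also of height at most `H`, for some integer `s`. -/
def CbarSet (n H : ℕ) : Set (Polynomial ℤ) :=
  {f | f.natDegree = n ∧ polyHeight f ≤ H ∧
    ∃ s : ℤ, IsEisenstein (f.comp (X + C s)) ∧ polyHeight (f.comp (X + C s)) ≤ H}

/-- `I_n(H)`: irreducible polynomials of degree exactly `n` over `ℤ` of height at most `H`. -/
def irredSet (n H : ℕ) : Set (Polynomial ℤ) :=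
  {f | f.natDegree = n ∧ polyHeight f ≤ H ∧ Irreducible f}

/-!
Fix an irreducible `g₀ ∈ 𝔽₂[x]` of degree `n` and count the integer polynomials of height at most
`H` and degree at most `n` that reduce to `g₀` modulo 2: there are at least `H ^ (n + 1)` of them.
Such an `f` has degree `n` and, by Gauss's lemma, is irreducible unless an odd prime divides all of
its coefficients. If `f (x + s)` is Eisenstein at `p` and of height at most `H`, then `p ≤ H` and
`f ≡ c (x - s) ^ n (mod p)`, which is impossible for `p = 2`. So each such `f` outside
`I_n(H) \ C̄_n(H)` lies in a class `f ≡ c (x + r) ^ n (mod p)` with `p` an odd prime at most `H`,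
and each such class contains at most `p ^ 2 (H / p + 1) ^ (n + 1)` of our polynomials. As
`n - 1 ≥ 2`, these bounds sum to at most `23/24 · H ^ (n + 1)` for large `H`, leaving at least
`H ^ (n + 1) / 24` elements of `I_n(H) \ C̄_n(H)` among the at most `(2H + 1) ^ (n + 1)` elements
of `I_n(H)`.
-/

open Finset

namespace Polynomial

theorem IsPrimitive.irreducible_of_irreducible_map_of_natDegree_eq {R S : Type*} [CommRing R]
    [IsDomain R] [CommRing S] [IsDomain S] {φ : R →+* S} {f : R[X]} (hf : f.IsPrimitive)
    (hdeg : (f.map φ).natDegree = f.natDegree) (h_irr : Irreducible (f.map φ)) :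
    Irreducible f := by
  refine ⟨fun hu => h_irr.not_isUnit (hu.map (mapRingHom φ)), fun a b hab => ?_⟩
  have isUnit_of_map : ∀ u v, f = u * v → IsUnit (u.map φ) → IsUnit u := by
    intro u v huv hu
    have hmap : f.map φ = u.map φ * v.map φ := by rw [huv, Polynomial.map_mul]
    have hf0 : f ≠ 0 := fun h => h_irr.ne_zero (by rw [h, Polynomial.map_zero])
    have hu0 : u ≠ 0 := fun h => hf0 (by rw [huv, h, zero_mul])
    have hv0 : v ≠ 0 := fun h => hf0 (by rw [huv, h, mul_zero])
    have hvmap0 : v.map φ ≠ 0 := fun h => h_irr.ne_zero (by rw [hmap, h, mul_zero])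
    have hsum : u.natDegree + v.natDegree = (u.map φ).natDegree + (v.map φ).natDegree := by
      rw [← natDegree_mul hu0 hv0, ← huv, ← hdeg, hmap, natDegree_mul hu.ne_zero hvmap0]
    have hu_deg : u.natDegree = 0 := by
      have := natDegree_map_le (f := φ) (p := u)
      have := natDegree_map_le (f := φ) (p := v)
      have := natDegree_eq_zero_of_isUnit hu
      omega
    rw [eq_C_of_natDegree_eq_zero hu_deg] at huv ⊢
    exact isUnit_C.2 (hf _ ⟨v, huv⟩)
  exact (h_irr.isUnit_or_isUnit (by rw [hab, Polynomial.map_mul])).imp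
    (isUnit_of_map a b hab) (isUnit_of_map b a (by rw [hab, mul_comm]))

theorem not_irreducible_C_mul_X_add_C_pow {K : Type*} [Field K] {n : ℕ} (hn : n ≠ 1) (c r : K) :
    ¬ Irreducible (C c * (X + C r) ^ n) := by
  rcases eq_or_ne c 0 with rfl | hc
  · simp [not_irreducible_zero]
  · rw [irreducible_isUnit_mul (isUnit_C.2 hc.isUnit)]
    exact not_irreducible_pow hn

theorem exists_irreducible_natDegree_eq (p : ℕ) [Fact p.Prime] {n : ℕ} (hn : n ≠ 0) :
    ∃ g : (ZMod p)[X], Irreducible g ∧ g.natDegree = n := by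
  obtain ⟨α, hα⟩ := Field.exists_primitive_element_of_finite_top (ZMod p) (GaloisField p n)
  refine ⟨minpoly (ZMod p) α, minpoly.irreducible (IsIntegral.of_finite _ _), ?_⟩
  rw [(Field.primitive_element_iff_minpoly_natDegree_eq (ZMod p) α).1 hα, GaloisField.finrank p hn]

end Polynomial

theorem natAbs_coeff_le_polyHeight (f : ℤ[X]) (i : ℕ) : (f.coeff i).natAbs ≤ polyHeight f := by
  rcases le_or_gt i f.natDegree with hi | hi
  · exact le_sup (f := fun i => (f.coeff i).natAbs) (mem_range.2 (Nat.lt_succ_of_le hi))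
  · simp [coeff_eq_zero_of_natDegree_lt hi]

theorem polyHeight_le_iff {f : ℤ[X]} {H : ℕ} : polyHeight f ≤ H ↔ ∀ i, (f.coeff i).natAbs ≤ H :=
  ⟨fun h i => (natAbs_coeff_le_polyHeight f i).trans h,
    fun h => Finset.sup_le fun i _ => h i⟩

theorem le_polyHeight_of_dvd_coeff {f : ℤ[X]} {p i : ℕ} (hdvd : (p : ℤ) ∣ f.coeff i)
    (hne : f.coeff i ≠ 0) : p ≤ polyHeight f :=
  (Nat.le_of_dvd (Int.natAbs_pos.2 hne) (Int.natCast_dvd.1 hdvd)).trans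
    (natAbs_coeff_le_polyHeight f i)

theorem exists_prime_le_polyHeight_map_eq_zero {f : ℤ[X]} (hf : f ≠ 0)
    (hprim : ¬ f.IsPrimitive) :
    ∃ p : ℕ, p.Prime ∧ p ≤ polyHeight f ∧ f.map (Int.castRingHom (ZMod p)) = 0 := by
  obtain ⟨r, hr, hunit⟩ : ∃ r, C r ∣ f ∧ ¬ IsUnit r := by
    simpa [isPrimitive_iff_isUnit_of_C_dvd] using hprim
  have hr1 : r.natAbs ≠ 1 := fun h => hunit (Int.isUnit_iff_natAbs_eq.2 h)
  obtain ⟨p, hp, hpr⟩ := Nat.exists_prime_and_dvd hr1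
  have hdvd : ∀ i, (p : ℤ) ∣ f.coeff i :=
    (C_dvd_iff_dvd_coeff _ _).1 ((map_dvd C (Int.natCast_dvd.2 hpr)).trans hr)
  refine ⟨p, hp, le_polyHeight_of_dvd_coeff (hdvd f.natDegree) (leadingCoeff_ne_zero.2 hf), ?_⟩
  ext i
  simpa [coeff_map, ZMod.intCast_zmod_eq_zero_iff_dvd] using hdvd i

/-- The case `c = 0`, where `p` divides every coefficient, is the obstruction to primitivity. -/
def IsShiftedMonomialMod (p n : ℕ) (f : ℤ[X]) : Prop :=
  ∃ c r : ZMod p, f.map (Int.castRingHom (ZMod p)) = C c * (X + C r) ^ n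

theorem IsEisensteinWith.map_eq {g : ℤ[X]} {p : ℕ} (hE : IsEisensteinWith g p) :
    g.map (Int.castRingHom (ZMod p)) = C (g.leadingCoeff : ZMod p) * X ^ g.natDegree := by
  ext j
  simp only [coeff_map, coeff_C_mul, coeff_X_pow, eq_intCast]
  rcases lt_trichotomy j g.natDegree with hj | rfl | hj
  · simpa [hj.ne, ZMod.intCast_zmod_eq_zero_iff_dvd] using hE.1 j hj
  · rw [if_pos rfl, mul_one]; rfl
  · simp [hj.ne', coeff_eq_zero_of_natDegree_lt hj]

theorem IsEisensteinWith.le_polyHeight {g : ℤ[X]} {p : ℕ} (hE : IsEisensteinWith g p)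
    (hg : 0 < g.natDegree) : p ≤ polyHeight g :=
  le_polyHeight_of_dvd_coeff (hE.1 0 hg) fun h => hE.2.1 (h ▸ dvd_zero _)

theorem isShiftedMonomialMod_of_isEisensteinWith_comp {f : ℤ[X]} {p : ℕ} {s : ℤ}
    (hE : IsEisensteinWith (f.comp (X + C s)) p) : IsShiftedMonomialMod p f.natDegree f := by
  have hdeg : (f.comp (X + C s)).natDegree = f.natDegree := by
    rw [natDegree_comp, natDegree_X_add_C, mul_one]
  have hlc : (f.comp (X + C s)).leadingCoeff = f.leadingCoeff := by
    rw [leadingCoeff_comp (by rw [natDegree_X_add_C]; exact one_ne_zero),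
      (monic_X_add_C s).leadingCoeff, one_pow, mul_one]
  refine ⟨f.leadingCoeff, -s, ?_⟩
  have hf : f = (f.comp (X + C s)).comp (X - C s) := by simp [comp_assoc]
  conv_lhs => rw [hf, map_comp, hE.map_eq, hdeg, hlc]
  simp [sub_eq_add_neg]

theorem exists_isShiftedMonomialMod_of_mem_CbarSet {n H : ℕ} {f : ℤ[X]} (hn : 0 < n)
    (hf : f ∈ CbarSet n H) : ∃ p, p.Prime ∧ p ≤ H ∧ IsShiftedMonomialMod p n f := by
  obtain ⟨rfl, -, s, ⟨p, hp, hE⟩, hsH⟩ := hf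
  have hdeg : 0 < (f.comp (X + C s)).natDegree := by
    rwa [natDegree_comp, natDegree_X_add_C, mul_one]
  exact ⟨p, hp, (hE.le_polyHeight hdeg).trans hsH,
    isShiftedMonomialMod_of_isEisensteinWith_comp hE⟩

theorem mem_irredSet_diff_CbarSet {n H : ℕ} (hn : 2 ≤ n) {f : ℤ[X]}
    (hirr : Irreducible (f.map (Int.castRingHom (ZMod 2))))
    (hdeg : (f.map (Int.castRingHom (ZMod 2))).natDegree = n) (hfn : f.natDegree ≤ n)
    (hfH : polyHeight f ≤ H)
    (hodd : ∀ p, p.Prime → 3 ≤ p → p ≤ H → ¬ IsShiftedMonomialMod p n f) :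
    f ∈ irredSet n H \ CbarSet n H := by
  have hfdeg : f.natDegree = n := le_antisymm hfn (hdeg ▸ natDegree_map_le)
  have hgood : ∀ p, p.Prime → p ≤ H → ¬ IsShiftedMonomialMod p n f := by
    rintro p hp hpH ⟨c, r, hcr⟩
    rcases eq_or_ne p 2 with rfl | hp2
    · exact not_irreducible_C_mul_X_add_C_pow (by omega) c r (hcr ▸ hirr)
    · exact hodd p hp (by have := hp.two_le; omega) hpH ⟨c, r, hcr⟩
  have hprim : f.IsPrimitive := by
    by_contra hprim
    have hf0 : f ≠ 0 := fun h => hirr.ne_zero (by simp [h])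
    obtain ⟨p, hp, hpf, hmap⟩ := exists_prime_le_polyHeight_map_eq_zero hf0 hprim
    exact hgood p hp (hpf.trans hfH) ⟨0, 0, by simp [hmap]⟩
  refine ⟨⟨hfdeg, hfH, hprim.irreducible_of_irreducible_map_of_natDegree_eq
    (hdeg.trans hfdeg.symm) hirr⟩, fun hC => ?_⟩
  obtain ⟨p, hp, hpH, hshift⟩ := exists_isShiftedMonomialMod_of_mem_CbarSet (by omega) hC
  exact hgood p hp hpH hshift

theorem Int.card_le_of_pairwise_modEq {S : Finset ℤ} {a b m : ℤ} (hab : a ≤ b) (hm : 0 < m)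
    (hS : S ⊆ Icc a b) (hmod : ∀ x ∈ S, ∀ y ∈ S, x ≡ y [ZMOD m]) :
    (#S : ℤ) ≤ (b - a) / m + 1 := by
  have hq : 0 ≤ (b - a) / m := Int.ediv_nonneg (by omega) hm.le
  have hinj : #S ≤ #(Icc 0 ((b - a) / m)) := by
    refine card_le_card_of_injOn (fun x => (x - a) / m) (fun x hx => ?_) fun x hx y hy hxy => ?_
    · obtain ⟨hax, hxb⟩ := mem_Icc.1 (hS hx)
      exact mem_Icc.2 ⟨Int.ediv_nonneg (by omega) hm.le, Int.ediv_le_ediv hm (by omega)⟩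
    · have hrem : (x - a) % m = (y - a) % m := ((hmod x hx y hy).sub_right a)
      have hx' := Int.emod_add_mul_ediv (x - a) m
      have hy' := Int.emod_add_mul_ediv (y - a) m
      simp only at hxy
      rw [hrem, hxy] at hx'
      linarith
  rw [Int.card_Icc, sub_zero] at hinj
  omega

theorem card_filter_Icc_intCast_eq_and_intCast_eq_le {u v : ℕ} (huv : u.Coprime v) (hu : 0 < u)
    (hv : 0 < v) (H : ℕ) (e : ZMod u) (b : ZMod v) :
    #((Icc (-H : ℤ) H).filter fun x : ℤ => (x : ZMod u) = e ∧ (x : ZMod v) = b) ≤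
      2 * H / (u * v) + 1 := by
  have key := Int.card_le_of_pairwise_modEq (a := -H) (b := H) (m := (u * v : ℕ)) (by omega)
    (by positivity) (filter_subset (fun x : ℤ => (x : ZMod u) = e ∧ (x : ZMod v) = b) _)
    fun x hx y hy => by
      simp only [mem_filter] at hx hy
      rw [Nat.cast_mul]
      refine (Int.modEq_and_modEq_iff_modEq_mul (by simpa using huv)).1 ⟨?_, ?_⟩
      · exact (ZMod.intCast_eq_intCast_iff _ _ _).1 (hx.2.1.trans hy.2.1.symm)
      · exact (ZMod.intCast_eq_intCast_iff _ _ _).1 (hx.2.2.trans hy.2.2.symm)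
  have h2H : (H : ℤ) - -H = ((2 * H : ℕ) : ℤ) := by push_cast; ring
  rw [h2H, ← Int.natCast_div] at key
  exact_mod_cast key

theorem le_card_filter_Icc_intCast_eq_two (H : ℕ) (e : ZMod 2) :
    H ≤ #((Icc (-H : ℤ) H).filter fun x : ℤ => (x : ZMod 2) = e) := by
  obtain ⟨w, hw, hwH, hwe⟩ : ∃ w : ℤ, -H ≤ w ∧ w ≤ -H + 1 ∧ (w : ZMod 2) = e := by
    by_cases h : ((-H : ℤ) : ZMod 2) = e
    · exact ⟨-H, le_rfl, by omega, h⟩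
    · refine ⟨-H + 1, by omega, le_rfl, ?_⟩
      rw [Int.cast_add, Int.cast_one]
      generalize ((-H : ℤ) : ZMod 2) = t at h ⊢
      revert t e
      decide
  calc H = #(range H) := (card_range H).symm
    _ ≤ _ := by
      refine card_le_card_of_injOn (fun j => w + 2 * j) (fun j hj => ?_) fun i _ j _ h => by
        simp only at h
        omega
      have hj := mem_range.1 hj
      simp only [mem_coe, mem_filter, mem_Icc]
      refine ⟨⟨by omega, by omega⟩, ?_⟩
      push_cast
      rw [show (2 : ZMod 2) = 0 from rfl, zero_mul, add_zero, hwe]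

noncomputable def parityBox (n H : ℕ) (g₀ : (ZMod 2)[X]) : Finset (Fin (n + 1) → ℤ) :=
  Fintype.piFinset fun i => (Icc (-H : ℤ) H).filter fun x : ℤ => (x : ZMod 2) = g₀.coeff i

open Classical in
noncomputable def shiftedMonomialModBox (n H : ℕ) (g₀ : (ZMod 2)[X]) (p : ℕ) :
    Finset (Fin (n + 1) → ℤ) :=
  (parityBox n H g₀).filter fun a => IsShiftedMonomialMod p n (ofFn (n + 1) a)

noncomputable def goodBox (n H : ℕ) (g₀ : (ZMod 2)[X]) : Finset (Fin (n + 1) → ℤ) :=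
  parityBox n H g₀ \ {p ∈ Icc 3 H | p.Prime}.biUnion (shiftedMonomialModBox n H g₀)

theorem pow_le_card_parityBox (n H : ℕ) (g₀ : (ZMod 2)[X]) :
    H ^ (n + 1) ≤ #(parityBox n H g₀) := by
  rw [parityBox, Fintype.card_piFinset]
  simpa using pow_card_le_prod (univ : Finset (Fin (n + 1))) _ H fun i _ =>
    le_card_filter_Icc_intCast_eq_two H (g₀.coeff i)

theorem card_filter_parityBox_map_eq_le {n H p : ℕ} (hp : p.Prime) (hp2 : p ≠ 2)
    (g₀ : (ZMod 2)[X]) (t : (ZMod p)[X]) [DecidablePred fun a : Fin (n + 1) → ℤ =>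
      (ofFn (n + 1) a).map (Int.castRingHom (ZMod p)) = t] :
    #((parityBox n H g₀).filter fun a => (ofFn (n + 1) a).map (Int.castRingHom (ZMod p)) = t) ≤
      (H / p + 1) ^ (n + 1) := by
  have hsub : ((parityBox n H g₀).filter fun a =>
      (ofFn (n + 1) a).map (Int.castRingHom (ZMod p)) = t) ⊆
      Fintype.piFinset fun i => (Icc (-H : ℤ) H).filter fun x : ℤ =>
        (x : ZMod 2) = g₀.coeff i ∧ (x : ZMod p) = t.coeff i := by
    intro a ha
    obtain ⟨hbox, hmap⟩ := mem_filter.1 ha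
    refine Fintype.mem_piFinset.2 fun i => ?_
    have hi := Fintype.mem_piFinset.1 hbox i
    simp only [mem_filter] at hi ⊢
    refine ⟨hi.1, hi.2, ?_⟩
    simpa [ofFn_coeff_eq_val_of_lt a i.isLt] using congrArg (coeff · i) hmap
  refine (card_le_card hsub).trans ?_
  rw [Fintype.card_piFinset]
  have h2p : 2 * H / (2 * p) = H / p := Nat.mul_div_mul_left H p two_pos
  simpa [h2p] using prod_le_pow_card (univ : Finset (Fin (n + 1))) _ _ fun i _ =>
    card_filter_Icc_intCast_eq_and_intCast_eq_le ((Nat.coprime_primes Nat.prime_two hp).2 hp2.symm)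
      two_pos hp.pos H (g₀.coeff i) (t.coeff i)

theorem card_shiftedMonomialModBox_le {n H p : ℕ} (hp : p.Prime) (hp2 : p ≠ 2)
    (g₀ : (ZMod 2)[X]) :
    #(shiftedMonomialModBox n H g₀ p) ≤ p ^ 2 * (H / p + 1) ^ (n + 1) := by
  classical
  have : NeZero p := ⟨hp.ne_zero⟩
  have hsub : shiftedMonomialModBox n H g₀ p ⊆ (univ : Finset (ZMod p × ZMod p)).biUnion fun cr =>
      (parityBox n H g₀).filter fun a =>
        (ofFn (n + 1) a).map (Int.castRingHom (ZMod p)) = C cr.1 * (X + C cr.2) ^ n := by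
    intro a ha
    obtain ⟨hbox, c, r, hcr⟩ := by simpa [shiftedMonomialModBox] using ha
    exact mem_biUnion.2 ⟨(c, r), mem_univ _, mem_filter.2 ⟨hbox, hcr⟩⟩
  refine (card_le_card hsub).trans ((card_biUnion_le_card_mul _ _ _ fun cr _ =>
    card_filter_parityBox_map_eq_le hp hp2 g₀ _).trans ?_)
  simp [sq]

theorem one_add_pow_le_inv_one_sub_mul {x : ℝ} {m : ℕ} (hx : 0 ≤ x) (hmx : m * x < 1) :
    (1 + x) ^ m ≤ (1 - m * x)⁻¹ :=
  calc (1 + x) ^ m ≤ Real.exp x ^ m :=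
        pow_le_pow_left₀ (by linarith) (by linarith [Real.add_one_le_exp x]) m
    _ = Real.exp (m * x) := (Real.exp_nat_mul x m).symm
    _ ≤ (1 - m * x)⁻¹ := by
        simpa using Real.exp_bound_div_one_sub_of_interval (by positivity) hmx

theorem sq_mul_div_add_one_pow_le {m : ℕ} (hm : 4 ≤ m) {p : ℕ} (hp : 1 ≤ p) {H : ℝ}
    (hH : 0 ≤ H) :
    (p : ℝ) ^ 2 * (H / p + 1) ^ m ≤ (H + p) ^ m / p ^ 2 := by
  have hp' : (1 : ℝ) ≤ p := by exact_mod_cast hp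
  have hsplit : (p : ℝ) ^ m = p ^ 2 * p ^ 2 * p ^ (m - 4) := by
    rw [← pow_add, ← pow_add]; congr 1; omega
  calc (p : ℝ) ^ 2 * (H / p + 1) ^ m = (H + p) ^ m / p ^ 2 / p ^ (m - 4) := by
        rw [div_add_one (by positivity), div_pow, hsplit]; field_simp
    _ ≤ (H + p) ^ m / p ^ 2 := div_le_self (by positivity) (one_le_pow₀ hp')

theorem sum_le_mul_of_le_div_sq {s : Finset ℕ} {k n : ℕ} (hs : s ⊆ Ioo k n) {f : ℕ → ℝ} {B : ℝ}
    (hB : 0 ≤ B) (hf : ∀ p ∈ s, f p ≤ B / p ^ 2) : ∑ p ∈ s, f p ≤ B * (2 / (k + 1)) :=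
  calc ∑ p ∈ s, f p ≤ ∑ p ∈ s, B * ((p : ℝ) ^ 2)⁻¹ :=
        sum_le_sum fun p hp => (hf p hp).trans_eq (div_eq_mul_inv _ _)
    _ = B * ∑ p ∈ s, ((p : ℝ) ^ 2)⁻¹ := (mul_sum _ _ _).symm
    _ ≤ B * (2 / (k + 1)) := mul_le_mul_of_nonneg_left
        ((sum_le_sum_of_subset_of_nonneg hs fun _ _ _ => by positivity).trans
          (sum_Ioo_inv_sq_le k n)) hB

theorem add_pow_le_five_div_four_mul_pow {m : ℕ} {H K : ℝ} (hH : 0 < H) (hK : 0 ≤ K)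
    (hHK : 5 * m * K ≤ H) : (H + K) ^ m ≤ 5 / 4 * H ^ m := by
  have hx : m * (K / H) ≤ 1 / 5 := by
    rw [mul_div_assoc', div_le_iff₀ hH]; linarith
  calc (H + K) ^ m = (1 + K / H) ^ m * H ^ m := by
        rw [← mul_pow, add_mul, one_mul, div_mul_cancel₀ _ hH.ne']
    _ ≤ (1 - m * (K / H))⁻¹ * H ^ m := by
        gcongr
        exact one_add_pow_le_inv_one_sub_mul (by positivity) (by linarith)
    _ ≤ 5 / 4 * H ^ m := by
        gcongr
        rw [inv_le_comm₀ (by linarith) (by norm_num)]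
        linarith

theorem sum_sq_mul_div_add_one_pow_le {m H : ℕ} (hm : 4 ≤ m) (hH : 5 * m * 2 ^ (m + 4) ≤ H) :
    ∑ p ∈ Icc 3 H, (p : ℝ) ^ 2 * (H / p + 1) ^ m ≤ 23 / 24 * (H : ℝ) ^ m := by
  set K := 2 ^ (m + 4) with hK
  have hK0 : (0 : ℝ) < K := by positivity
  have hHK : (5 * m * K : ℝ) ≤ H := by exact_mod_cast hH
  have hH0 : (0 : ℝ) < H := by nlinarith [(by exact_mod_cast (by omega : 1 ≤ m) : (1 : ℝ) ≤ m)]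
  have hterm : ∀ p ∈ Icc 3 H, (p : ℝ) ^ 2 * (H / p + 1) ^ m ≤ (H + p) ^ m / p ^ 2 := fun p hp =>
    sq_mul_div_add_one_pow_le hm (by linarith [(mem_Icc.1 hp).1]) hH0.le
  have hsmall : ∑ p ∈ Icc 3 H with p ≤ K, (p : ℝ) ^ 2 * (H / p + 1) ^ m ≤
      5 / 6 * (H : ℝ) ^ m := by
    refine (sum_le_mul_of_le_div_sq (k := 2) (n := K + 1) (B := ((H : ℝ) + K) ^ m)
      (fun p hp => ?_) (by positivity) fun p hp => (hterm p (mem_filter.1 hp).1).trans ?_).trans ?_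
    · simp only [mem_filter, mem_Icc] at hp
      exact mem_Ioo.2 ⟨by omega, by omega⟩
    · have hpK : (p : ℝ) ≤ K := by exact_mod_cast (mem_filter.1 hp).2
      gcongr
    · have := add_pow_le_five_div_four_mul_pow hH0 hK0.le hHK
      push_cast
      nlinarith [pow_pos hH0 m]
  have hlarge : ∑ p ∈ Icc 3 H with ¬ p ≤ K, (p : ℝ) ^ 2 * (H / p + 1) ^ m ≤
      1 / 8 * (H : ℝ) ^ m := by
    refine (sum_le_mul_of_le_div_sq (k := K) (n := H + 1) (B := (2 * (H : ℝ)) ^ m)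
      (fun p hp => ?_) (by positivity) fun p hp => (hterm p (mem_filter.1 hp).1).trans ?_).trans ?_
    · simp only [mem_filter, mem_Icc] at hp
      exact mem_Ioo.2 ⟨by omega, by omega⟩
    · have hpH : (p : ℝ) ≤ H := by exact_mod_cast (mem_Icc.1 (mem_filter.1 hp).1).2
      gcongr
      linarith
    · calc (2 * (H : ℝ)) ^ m * (2 / (K + 1)) ≤ (2 * (H : ℝ)) ^ m * (2 / K) := by
            gcongr; linarith
        _ = 1 / 8 * (H : ℝ) ^ m := by
          rw [hK, mul_pow]; push_cast; field_simp; ring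
  rw [← sum_filter_add_sum_filter_not (Icc 3 H) (· ≤ K)]
  linarith

theorem card_goodBox_ge {n H : ℕ} (hn : 2 < n) (g₀ : (ZMod 2)[X])
    (hH : 5 * (n + 1) * 2 ^ (n + 5) ≤ H) : (H : ℝ) ^ (n + 1) / 24 ≤ #(goodBox n H g₀) := by
  have hcover : #(parityBox n H g₀) ≤
      #(goodBox n H g₀) + ∑ p ∈ Icc 3 H with p.Prime, #(shiftedMonomialModBox n H g₀ p) :=
    card_le_card_sdiff_add_card.trans (Nat.add_le_add_left card_biUnion_le _)
  have hbad : ∑ p ∈ Icc 3 H with p.Prime, (#(shiftedMonomialModBox n H g₀ p) : ℝ) ≤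
      ∑ p ∈ Icc 3 H, (p : ℝ) ^ 2 * (H / p + 1) ^ (n + 1) := by
    refine (sum_le_sum fun p hp => ?_).trans
      (sum_le_sum_of_subset_of_nonneg (filter_subset _ _) fun _ _ _ => by positivity)
    obtain ⟨hp3, hp⟩ := mem_filter.1 hp
    calc (#(shiftedMonomialModBox n H g₀ p) : ℝ) ≤ ((p ^ 2 * (H / p + 1) ^ (n + 1) : ℕ) : ℝ) := by
          exact_mod_cast card_shiftedMonomialModBox_le hp (by have := (mem_Icc.1 hp3).1; omega) g₀
      _ ≤ (p : ℝ) ^ 2 * (H / p + 1) ^ (n + 1) := by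
          push_cast
          gcongr
          exact Nat.cast_div_le
  have hbox : ((H ^ (n + 1) : ℕ) : ℝ) ≤ #(parityBox n H g₀) := by
    exact_mod_cast pow_le_card_parityBox n H g₀
  have hsum := sum_sq_mul_div_add_one_pow_le (m := n + 1) (by omega) hH
  have hcover' : (#(parityBox n H g₀) : ℝ) ≤
      #(goodBox n H g₀) + ∑ p ∈ Icc 3 H with p.Prime, (#(shiftedMonomialModBox n H g₀ p) : ℝ) := by
    exact_mod_cast hcover
  push_cast at hbox
  linarith

theorem ofFn_mem_irredSet_diff_CbarSet {n H : ℕ} (hn : 2 ≤ n) {g₀ : (ZMod 2)[X]}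
    (hg₀ : Irreducible g₀) (hg₀n : g₀.natDegree = n) {a : Fin (n + 1) → ℤ}
    (ha : a ∈ goodBox n H g₀) : ofFn (n + 1) a ∈ irredSet n H \ CbarSet n H := by
  obtain ⟨hbox, hnot⟩ := mem_sdiff.1 ha
  have hcoeff : ∀ i : Fin (n + 1), -(H : ℤ) ≤ a i ∧ a i ≤ H ∧ (a i : ZMod 2) = g₀.coeff i := by
    intro i
    simpa [and_assoc] using Fintype.mem_piFinset.1 hbox i
  have hmap : (ofFn (n + 1) a).map (Int.castRingHom (ZMod 2)) = g₀ := by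
    ext i
    rcases lt_or_ge i (n + 1) with hi | hi
    · simpa [hi] using (hcoeff ⟨i, hi⟩).2.2
    · simp [hi, coeff_eq_zero_of_natDegree_lt (hg₀n ▸ hi : g₀.natDegree < i)]
  have hheight : polyHeight (ofFn (n + 1) a) ≤ H := by
    refine polyHeight_le_iff.2 fun i => ?_
    rcases lt_or_ge i (n + 1) with hi | hi
    · have := hcoeff ⟨i, hi⟩
      simp only [ofFn_coeff_eq_val_of_lt a hi]
      omega
    · simp [hi]
  refine mem_irredSet_diff_CbarSet hn (hmap ▸ hg₀) (hmap ▸ hg₀n)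
    (Nat.le_of_lt_succ (ofFn_natDegree_lt (by omega) a)) hheight fun p hp hp3 hpH hshift => ?_
  classical
  exact hnot (mem_biUnion.2 ⟨p, mem_filter.2 ⟨mem_Icc.2 ⟨hp3, hpH⟩, hp⟩,
    by simpa [shiftedMonomialModBox] using ⟨hbox, hshift⟩⟩)

theorem irredSet_subset_image_ofFn (n H : ℕ) :
    irredSet n H ⊆
      (Fintype.piFinset fun _ : Fin (n + 1) => Icc (-H : ℤ) H).image (ofFn (n + 1)) := by
  rintro f ⟨hdeg, hH, -⟩
  refine mem_image.2 ⟨toFn (n + 1) f, Fintype.mem_piFinset.2 fun i => mem_Icc.2 ?_,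
    ofFn_comp_toFn_eq_id_of_natDegree_lt (by omega)⟩
  have := polyHeight_le_iff.1 hH i
  simp only [toFn, LinearMap.pi_apply, lcoeff_apply]
  omega

theorem irredSet_finite (n H : ℕ) : (irredSet n H).Finite :=
  (Finset.finite_toSet _).subset (irredSet_subset_image_ofFn n H)

theorem ncard_irredSet_le (n H : ℕ) : (irredSet n H).ncard ≤ (2 * H + 1) ^ (n + 1) := by
  refine (Set.ncard_le_ncard (irredSet_subset_image_ofFn n H) (Finset.finite_toSet _)).trans ?_
  rw [Set.ncard_coe_finset]
  refine card_image_le.trans_eq ?_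
  simp only [Fintype.card_piFinset, Int.card_Icc, prod_const, card_univ, Fintype.card_fin]
  congr 1
  omega

theorem pow_div_le_ncard_irredSet_diff_CbarSet {n H : ℕ} (hn : 2 < n)
    (hH : 5 * (n + 1) * 2 ^ (n + 5) ≤ H) :
    (H : ℝ) ^ (n + 1) / 24 ≤ (irredSet n H \ CbarSet n H).ncard := by
  have : Fact (Nat.Prime 2) := ⟨Nat.prime_two⟩
  obtain ⟨g₀, hg₀, hg₀n⟩ := exists_irreducible_natDegree_eq 2 (by omega : n ≠ 0)
  have hsub : ((goodBox n H g₀).image (ofFn (n + 1)) : Set ℤ[X]) ⊆ irredSet n H \ CbarSet n H := by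
    intro f hf
    obtain ⟨a, ha, rfl⟩ := mem_image.1 hf
    exact ofFn_mem_irredSet_diff_CbarSet (by omega) hg₀ hg₀n ha
  have hcard : #(goodBox n H g₀) ≤ (irredSet n H \ CbarSet n H).ncard := by
    rw [← card_image_of_injective _ (injective_ofFn (n + 1)), ← Set.ncard_coe_finset]
    exact Set.ncard_le_ncard hsub ((irredSet_finite n H).subset Set.sdiff_subset)
  exact (card_goodBox_ge hn g₀ hH).trans (by exact_mod_cast hcard)

theorem ncard_irredSet_diff_CbarSet_le (n H : ℕ) :
    (irredSet n H \ CbarSet n H).ncard ≤ (irredSet n H).ncard :=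
  Set.ncard_le_ncard Set.sdiff_subset (irredSet_finite n H)

theorem ncard_irredSet_diff_CbarSet_div_le_one (n H : ℕ) :
    ((irredSet n H \ CbarSet n H).ncard : ℝ) / (irredSet n H).ncard ≤ 1 :=
  div_le_one_of_le₀ (by exact_mod_cast ncard_irredSet_diff_CbarSet_le n H) (Nat.cast_nonneg _)

theorem le_ncard_irredSet_diff_CbarSet_div {n H : ℕ} (hn : 2 < n)
    (hH : 5 * (n + 1) * 2 ^ (n + 5) ≤ H) :
    1 / (24 * 3 ^ (n + 1)) ≤ ((irredSet n H \ CbarSet n H).ncard : ℝ) / (irredSet n H).ncard := by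
  have hH1 : (1 : ℝ) ≤ H := by exact_mod_cast (lt_of_lt_of_le (by positivity) hH)
  have hnum := pow_div_le_ncard_irredSet_diff_CbarSet hn hH
  have hden : ((irredSet n H).ncard : ℝ) ≤ (3 * H) ^ (n + 1) := by
    calc ((irredSet n H).ncard : ℝ) ≤ ((2 * H + 1 : ℕ) : ℝ) ^ (n + 1) := by
          exact_mod_cast ncard_irredSet_le n H
      _ ≤ (3 * H) ^ (n + 1) := by
          gcongr
          push_cast
          linarith
  have hpos : 0 < ((irredSet n H).ncard : ℝ) :=
    (by positivity : (0 : ℝ) < H ^ (n + 1) / 24).trans_le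
      (hnum.trans (by exact_mod_cast ncard_irredSet_diff_CbarSet_le n H))
  calc 1 / (24 * 3 ^ (n + 1) : ℝ) = (H : ℝ) ^ (n + 1) / 24 / (3 * H) ^ (n + 1) := by
        rw [mul_pow]; field_simp
    _ ≤ _ := div_le_div₀ (Nat.cast_nonneg _) hnum hpos hden

/-- For every `n > 2`: `liminf_{H→∞} #(I_n(H) \ C̄_n(H)) / #I_n(H) > 0`. -/
theorem liminf_irred_not_Cbar_pos (n : ℕ) (hn : 2 < n) :
    0 < liminf (fun H : ℕ =>
        (Nat.card ↥(irredSet n H \ CbarSet n H) : ℝ) / (Nat.card (irredSet n H) : ℝ))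
      atTop := by
  simp only [Nat.card_coe_set_eq]
  refine (by positivity : (0 : ℝ) < 1 / (24 * 3 ^ (n + 1))).trans_le (le_liminf_of_le ?_ ?_)
  · exact isCoboundedUnder_ge_of_le atTop (ncard_irredSet_diff_CbarSet_div_le_one n)
  · filter_upwards [eventually_ge_atTop (5 * (n + 1) * 2 ^ (n + 5))] with H hH
    exact le_ncard_irredSet_diff_CbarSet_div hn hH
end
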